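/- arXiv:1604.03482 — 4 statements merged into one kernel-verified Lean document; each statement's English description precedes it below -/
import Mathlib

section
/- Let N be a positive integer and let V_1, …, V_N be finite sets. Let X be a real symmetric block matrix with N×N blocks, where block X_{ij} has size |V_i|×|V_j| and all entries of X lie in {0,1}. Suppose (1) X is positive semidefinite, (2) X_{ii} is the identity matrix of size |V_i| for every 1 ≤ i ≤ N, and (3) every row sum and every column sum of each off-diagonal block X_{ij} (i ≠ j) is at most 1. Then there exists a positive integer K and a binary matrix Y with rows indexed by the disjoint union of V_1, …, V_N and columns indexed by {1,…,K}, such that every row of Y has exactly one nonzero entry, for each i the submatrix Y_i of rows indexed by V_i has at most one nonzero entry in each column, and X = Y Yᵀ. (That is, X encodes a feasible one-to-one global alignment of N networks satisfying the cycle-consistency property.) -/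
open Matrix

/-!
The relation `X u v = 1` is an equivalence relation: reflexive because the diagonal blocks are
identities, symmetric because `X` is, and transitive because otherwise the quadratic form of `X`
at `e_u - e_v + e_w` would be `3 - 2 - 2 + 0 = -1`. Its classes are the clusters and `Y` is
their indicator matrix; since `X` is binary, `X = Y Yᵀ`, and a cluster meets each `V i` at most
once because the diagonal block `X_ii` is the identity.
-/

namespace Matrix

variable {n : Type*} {X : Matrix n n ℝ}

theorem PosSemidef.apply_eq_one_trans (hX : X.PosSemidef) (hbin : ∀ u v, X u v = 0 ∨ X u v = 1)
    (hone : ∀ u, X u u = 1) {u v w : n} (huv : X u v = 1) (hvw : X v w = 1) : X u w = 1 := by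
  refine (hbin u w).resolve_left fun huw => ?_
  have hsymm := (isHermitian_iff_isSymm.mp hX.isHermitian).apply
  have hq := (hX.submatrix ![u, v, w]).dotProduct_mulVec_nonneg ![1, -1, 1]
  simp only [dotProduct, mulVec, Fin.sum_univ_three, submatrix_apply, cons_val_zero, cons_val_one,
    cons_val_two, head_cons, tail_cons, Pi.star_apply, star_trivial] at hq
  rw [hone, hone, hone, hsymm u v, hsymm u w, hsymm v w, huv, hvw, huw] at hq
  norm_num at hq

theorem PosSemidef.equivalence_apply_eq_one (hX : X.PosSemidef)
    (hbin : ∀ u v, X u v = 0 ∨ X u v = 1) (hone : ∀ u, X u u = 1) :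
    Equivalence fun u v => X u v = 1 where
  refl := hone
  symm {u v} h := (isHermitian_iff_isSymm.mp hX.isHermitian).apply u v ▸ h
  trans := hX.apply_eq_one_trans hbin hone

end Matrix

theorem Setoid.exists_fin_classifier {α : Type*} [Finite α] (s : Setoid α) :
    ∃ K, 0 < K ∧ ∃ f : α → Fin K, ∀ u v, f u = f v ↔ s u v := by
  refine ⟨Nat.card (Quotient s) + 1, Nat.succ_pos _,
    fun u => (Finite.equivFin _ (Quotient.mk s u)).castSucc, fun u v => ?_⟩
  simp only [Fin.castSucc_inj, EmbeddingLike.apply_eq_iff_eq, Quotient.eq]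

section ClusterIndicator

variable {α κ : Type*} [DecidableEq κ]

def clusterIndicator (R : Type*) [Zero R] [One R] (f : α → κ) : Matrix α κ R :=
  of fun u k => if f u = k then 1 else 0

variable {R : Type*}

theorem clusterIndicator_apply_eq_zero_or_eq_one [Zero R] [One R] (f : α → κ) (u : α) (k : κ) :
    clusterIndicator R f u k = 0 ∨ clusterIndicator R f u k = 1 := by
  by_cases h : f u = k <;> simp [clusterIndicator, h]

theorem clusterIndicator_apply_eq_one_iff [Zero R] [One R] [NeZero (1 : R)] {f : α → κ} {u : α}
    {k : κ} : clusterIndicator R f u k = 1 ↔ f u = k := by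
  by_cases h : f u = k <;> simp [clusterIndicator, h]

theorem clusterIndicator_mul_transpose_apply [Fintype κ] [NonAssocSemiring R] (f : α → κ)
    (u v : α) :
    (clusterIndicator R f * (clusterIndicator R f)ᵀ) u v = if f u = f v then 1 else 0 := by
  simp [clusterIndicator, mul_apply]

end ClusterIndicator

theorem binary_psd_block_matrix_encodes_alignment_general
    (N : ℕ) (V : Fin N → Type) [∀ i, Fintype (V i)]
    [∀ i, DecidableEq (V i)]
    (X : Matrix ((i : Fin N) × V i) ((i : Fin N) × V i) ℝ)
    (hbin : ∀ u v, X u v = 0 ∨ X u v = 1)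
    (hpsd : X.PosSemidef)
    (hdiag : ∀ (i : Fin N) (u v : V i), X ⟨i, u⟩ ⟨i, v⟩ = if u = v then 1 else 0) :
    ∃ (K : ℕ), 0 < K ∧ ∃ Y : Matrix ((i : Fin N) × V i) (Fin K) ℝ,
      (∀ u k, Y u k = 0 ∨ Y u k = 1) ∧
      (∀ u : (i : Fin N) × V i, ∃! k, Y u k = 1) ∧
      (∀ (i : Fin N) (k : Fin K) (u v : V i), Y ⟨i, u⟩ k = 1 → Y ⟨i, v⟩ k = 1 → u = v) ∧
      X = Y * Yᵀ := by
  have hone : ∀ u, X u u = 1 := fun ⟨i, a⟩ => by simpa using hdiag i a a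
  obtain ⟨K, hK, f, hf⟩ :=
    Setoid.exists_fin_classifier ⟨_, hpsd.equivalence_apply_eq_one hbin hone⟩
  refine ⟨K, hK, clusterIndicator ℝ f, clusterIndicator_apply_eq_zero_or_eq_one f,
    fun u => ⟨f u, clusterIndicator_apply_eq_one_iff.2 rfl,
      fun k hk => (clusterIndicator_apply_eq_one_iff.1 hk).symm⟩,
    fun i k u v hu hv => ?_, ?_⟩
  · have hX : X ⟨i, u⟩ ⟨i, v⟩ = 1 := (hf _ _).1 <|
      (clusterIndicator_apply_eq_one_iff.1 hu).trans (clusterIndicator_apply_eq_one_iff.1 hv).symm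
    simpa [hdiag] using hX
  · ext u v
    rw [clusterIndicator_mul_transpose_apply]
    split_ifs with h
    · exact (hf u v).1 h
    · exact (hbin u v).resolve_right (h ∘ (hf u v).2)

/-- Proposition 1: a binary PSD block matrix with identity diagonal blocks and
doubly substochastic off-diagonal blocks encodes a feasible one-to-one global
alignment, i.e. it is `Y * Yᵀ` for a cluster-indicator matrix `Y`. -/
theorem binary_psd_block_matrix_encodes_alignment
    (N : ℕ) (hN : 0 < N) (V : Fin N → Type) [∀ i, Fintype (V i)]
    [∀ i, DecidableEq (V i)]
    (X : Matrix ((i : Fin N) × V i) ((i : Fin N) × V i) ℝ)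
    (hbin : ∀ u v, X u v = 0 ∨ X u v = 1)
    (hpsd : X.PosSemidef)
    (hdiag : ∀ (i : Fin N) (u v : V i), X ⟨i, u⟩ ⟨i, v⟩ = if u = v then 1 else 0)
    (hrow : ∀ (i j : Fin N), i ≠ j → ∀ u : V i, ∑ v : V j, X ⟨i, u⟩ ⟨j, v⟩ ≤ 1)
    (hcol : ∀ (i j : Fin N), i ≠ j → ∀ v : V j, ∑ u : V i, X ⟨i, u⟩ ⟨j, v⟩ ≤ 1) :
    ∃ (K : ℕ), 0 < K ∧ ∃ Y : Matrix ((i : Fin N) × V i) (Fin K) ℝ,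
      (∀ u k, Y u k = 0 ∨ Y u k = 1) ∧
      (∀ u : (i : Fin N) × V i, ∃! k, Y u k = 1) ∧
      (∀ (i : Fin N) (k : Fin K) (u v : V i), Y ⟨i, u⟩ k = 1 → Y ⟨i, v⟩ k = 1 → u = v) ∧
      X = Y * Yᵀ :=
  binary_psd_block_matrix_encodes_alignment_general N V X hbin hpsd hdiag
end

section
/- Let X be a real symmetric positive semidefinite n×n matrix all of whose entries lie in {0,1}. Suppose a, b, c are indices with X(a,a) = X(b,b) = X(c,c) = 1, X(a,b) = 1 and X(a,c) = 1. Then X(b,c) = 1. -/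
/-- Cycle consistency: in a binary symmetric PSD matrix with unit diagonal,
if `X a b = 1` and `X a c = 1` then `X b c = 1`. -/
theorem binary_psd_transitive
    (n : ℕ) (X : Matrix (Fin n) (Fin n) ℝ)
    (hbin : ∀ i j, X i j = 0 ∨ X i j = 1)
    (hpsd : X.PosSemidef)
    (a b c : Fin n)
    (haa : X a a = 1) (hbb : X b b = 1) (hcc : X c c = 1)
    (hab : X a b = 1) (hac : X a c = 1) :
    X b c = 1 := by
  rcases eq_or_ne b c with rfl | hbc
  · exact hbb
  rcases eq_or_ne a b with rfl | hab'
  · exact hac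
  rcases eq_or_ne a c with rfl | hac'
  · have := hpsd.1
    have hba : X b a = X a b := by
      have h := congrFun (congrFun hpsd.1 a) b
      simpa [Matrix.conjTranspose_apply] using h
    rw [hba, hab]
  rcases hbin b c with h0 | h1
  · exfalso
    have hba : X b a = 1 := by
      have h := congrFun (congrFun hpsd.1 a) b
      simp only [Matrix.conjTranspose_apply, star_trivial] at h
      rw [h, hab]
    have hca : X c a = 1 := by
      have h := congrFun (congrFun hpsd.1 a) c
      simp only [Matrix.conjTranspose_apply, star_trivial] at h
      rw [h, hac]
    have hcb : X c b = 0 := by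
      have h := congrFun (congrFun hpsd.1 b) c
      simp only [Matrix.conjTranspose_apply, star_trivial] at h
      rw [h, h0]
    have h := hpsd.dotProduct_mulVec_nonneg (Pi.single a 1 - Pi.single b 1 - Pi.single c 1)
    simp only [star_trivial, Matrix.mulVec_sub, Matrix.mulVec_single,
      dotProduct_sub, sub_dotProduct, Pi.single_apply,
      single_dotProduct, dotProduct_single, mul_one] at h
    simp [dotProduct, Pi.single_apply, Finset.sum_ite_eq,
      haa, hbb, hcc, hab, hac, hba, hca, h0, hcb, mul_sub, sub_mul] at h
    linarith
  · exact h1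
end

section
/- Let X be a real symmetric positive semidefinite n×n matrix all of whose entries lie in {0,1} and with X(i,i) = 1 for every index i. Then the binary relation on {1,…,n} defined by i ~ j if and only if X(i,j) = 1 is an equivalence relation (reflexive, symmetric, and transitive). -/
/-!
Evaluating the quadratic form of `X` at `eᵢ - eⱼ + eₖ` gives
`2 (X i j + X j k - X i k) ≤ X i i + X j j + X k k`. With unit diagonal and
`X i j = X j k = 1` this forces `X i k ≥ 1/2`, hence `X i k = 1` since the entries are binary.
-/

namespace Matrix.PosSemidef

variable {ι : Type*} {X : Matrix ι ι ℝ}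

theorem apply_symm (hX : X.PosSemidef) (i j : ι) : X j i = X i j :=
  (isHermitian_iff_isSymm.mp hX.isHermitian).apply i j

theorem two_mul_apply_add_apply_sub_apply_le [Fintype ι] [DecidableEq ι] (hX : X.PosSemidef)
    (i j k : ι) : 2 * (X i j + X j k - X i k) ≤ X i i + X j j + X k k := by
  have h := hX.dotProduct_mulVec_nonneg (Pi.single i 1 - Pi.single j 1 + Pi.single k 1)
  simp only [star_trivial, mulVec_add, mulVec_sub, mulVec_single_one, dotProduct_add,
    dotProduct_sub, add_dotProduct, sub_dotProduct, single_dotProduct, col_apply, one_mul] at h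
  linarith [hX.apply_symm i j, hX.apply_symm i k, hX.apply_symm j k]

end Matrix.PosSemidef

/-- For a binary symmetric PSD matrix with unit diagonal, the relation
`X i j = 1` is an equivalence relation. -/
theorem binary_psd_equivalence
    (n : ℕ) (X : Matrix (Fin n) (Fin n) ℝ)
    (hbin : ∀ i j, X i j = 0 ∨ X i j = 1)
    (hpsd : X.PosSemidef)
    (hdiag : ∀ i, X i i = 1) :
    Equivalence (fun i j : Fin n => X i j = 1) := by
  refine ⟨hdiag, fun h => by rwa [hpsd.apply_symm], fun {i j k} hij hjk => ?_⟩
  have h := hpsd.two_mul_apply_add_apply_sub_apply_le i j k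
  rw [hij, hjk, hdiag, hdiag, hdiag] at h
  exact (hbin i k).resolve_left fun hik => by linarith
end

section
/- Let N be a positive integer, let V_1, …, V_N be finite sets with disjoint union V, and let K be a positive integer. Let Y be a binary matrix with rows indexed by V and columns indexed by {1,…,K} such that every row of Y has exactly one nonzero entry and, for each i, the submatrix Y_i of rows indexed by V_i has at most one nonzero entry in each column. Set X = Y Yᵀ. Then X is positive semidefinite, all entries of X lie in {0,1}, the diagonal block X_{ii} (rows and columns indexed by V_i) is the identity matrix for every i, and every row sum and every column sum of each off-diagonal block X_{ij} (i ≠ j) is at most 1. -/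
/-!
Each row of `Y` is the standard basis row vector of the cluster `f u` containing the vertex `u`,
so `Y = 1.submatrix f id` and `Y * Yᵀ = 1.submatrix f f`: the entry at `(u, v)` is `1` exactly
when `u` and `v` lie in the same cluster. Positive semidefiniteness holds for every Gram matrix.
A cluster meets each network in at most one vertex, i.e. `f` is injective on each block `V i`;
this makes the diagonal blocks identities and bounds every row and column sum of a block by `1`.
-/

open Matrix Function

namespace Matrix

variable {ι κ ι' R : Type*} [DecidableEq κ]

theorem exists_eq_one_submatrix_of_existsUnique [Zero R] [One R] {Y : Matrix ι κ R}
    (hbin : ∀ u k, Y u k = 0 ∨ Y u k = 1) (hrow : ∀ u, ∃! k, Y u k = 1) :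
    ∃ f : ι → κ, Y = (1 : Matrix κ κ R).submatrix f id := by
  choose f hf hf_unique using hrow
  refine ⟨f, ext fun u k => ?_⟩
  rw [submatrix_apply, id, one_apply]
  split_ifs with h
  · exact h ▸ hf u
  · exact (hbin u k).resolve_right fun h' => h (hf_unique u k h').symm

theorem one_submatrix_mul_transpose [Fintype κ] [NonAssocSemiring R] (f : ι → κ) :
    (1 : Matrix κ κ R).submatrix f id * ((1 : Matrix κ κ R).submatrix f id)ᵀ =
      (1 : Matrix κ κ R).submatrix f f := by
  rw [transpose_submatrix, transpose_one, ← submatrix_mul _ _ _ _ _ bijective_id, Matrix.mul_one]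

theorem one_submatrix_apply_eq_zero_or_eq_one [Zero R] [One R] (f : ι → κ) (g : ι' → κ)
    (u : ι) (v : ι') :
    (1 : Matrix κ κ R).submatrix f g u v = 0 ∨ (1 : Matrix κ κ R).submatrix f g u v = 1 := by
  rw [submatrix_apply, one_apply]
  split_ifs
  · exact .inr rfl
  · exact .inl rfl

theorem sum_one_submatrix_le_one [Fintype ι'] [Fintype κ] [Semiring R] [PartialOrder R]
    [IsOrderedRing R] (f : ι → κ) {g : ι' → κ} (hg : Injective g) (u : ι) :
    ∑ v, (1 : Matrix κ κ R).submatrix f g u v ≤ 1 :=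
  calc ∑ v, (1 : Matrix κ κ R) (f u) (g v)
      = ∑ k ∈ Finset.univ.map ⟨g, hg⟩, (1 : Matrix κ κ R) (f u) k := by rw [Finset.sum_map]; rfl
    _ ≤ ∑ k, (1 : Matrix κ κ R) (f u) k :=
        Finset.sum_le_univ_sum_of_nonneg fun k => by rw [one_apply]; split_ifs <;> simp
    _ = 1 := by simp [one_apply]

end Matrix

theorem indicator_gram_satisfies_constraints_general
    (N : ℕ) (V : Fin N → Type) [∀ i, Fintype (V i)]
    [∀ i, DecidableEq (V i)]
    (K : ℕ)
    (Y : Matrix ((i : Fin N) × V i) (Fin K) ℝ)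
    (hYbin : ∀ u k, Y u k = 0 ∨ Y u k = 1)
    (hYrow : ∀ u : (i : Fin N) × V i, ∃! k, Y u k = 1)
    (hYcol : ∀ (i : Fin N) (k : Fin K) (u v : V i),
      Y ⟨i, u⟩ k = 1 → Y ⟨i, v⟩ k = 1 → u = v) :
    (Y * Yᵀ).PosSemidef ∧
    (∀ u v, (Y * Yᵀ) u v = 0 ∨ (Y * Yᵀ) u v = 1) ∧
    (∀ (i : Fin N) (u v : V i), (Y * Yᵀ) ⟨i, u⟩ ⟨i, v⟩ = if u = v then 1 else 0) ∧
    (∀ (i j : Fin N), i ≠ j → ∀ u : V i, ∑ v : V j, (Y * Yᵀ) ⟨i, u⟩ ⟨j, v⟩ ≤ 1) ∧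
    (∀ (i j : Fin N), i ≠ j → ∀ v : V j, ∑ u : V i, (Y * Yᵀ) ⟨i, u⟩ ⟨j, v⟩ ≤ 1) := by
  have hpsd : (Y * Yᵀ).PosSemidef := by
    simpa only [conjTranspose_eq_transpose_of_trivial] using posSemidef_self_mul_conjTranspose Y
  obtain ⟨f, rfl⟩ := exists_eq_one_submatrix_of_existsUnique hYbin hYrow
  have hinj (i : Fin N) : Injective (f ∘ Sigma.mk i) := fun u v h =>
    hYcol i (f ⟨i, u⟩) u v (one_apply_eq _) (by simp [one_apply, show f ⟨i, u⟩ = f ⟨i, v⟩ from h])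
  rw [one_submatrix_mul_transpose] at hpsd ⊢
  refine ⟨hpsd, one_submatrix_apply_eq_zero_or_eq_one f f, fun i u v => ?_,
    fun i j _ u => sum_one_submatrix_le_one (f ∘ Sigma.mk i) (hinj j) u,
    fun i j _ v => ?_⟩
  · exact congrFun (congrFun (submatrix_one _ (hinj i)) u) v |>.trans (one_apply ..)
  · simp only [(isSymm_one.submatrix f).apply ⟨j, v⟩]
    exact sum_one_submatrix_le_one (f ∘ Sigma.mk j) (hinj i) v

/-- Converse direction of Proposition 1: a binary cluster-indicator matrix `Y`
(each row has exactly one nonzero entry, and within each block of rows `V i`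
each column has at most one nonzero entry) gives via `X = Y * Yᵀ` a PSD binary
matrix with identity diagonal blocks and doubly substochastic off-diagonal
blocks. -/
theorem indicator_gram_satisfies_constraints
    (N : ℕ) (hN : 0 < N) (V : Fin N → Type) [∀ i, Fintype (V i)]
    [∀ i, DecidableEq (V i)]
    (K : ℕ) (hK : 0 < K)
    (Y : Matrix ((i : Fin N) × V i) (Fin K) ℝ)
    (hYbin : ∀ u k, Y u k = 0 ∨ Y u k = 1)
    (hYrow : ∀ u : (i : Fin N) × V i, ∃! k, Y u k = 1)
    (hYcol : ∀ (i : Fin N) (k : Fin K) (u v : V i),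
      Y ⟨i, u⟩ k = 1 → Y ⟨i, v⟩ k = 1 → u = v) :
    (Y * Yᵀ).PosSemidef ∧
    (∀ u v, (Y * Yᵀ) u v = 0 ∨ (Y * Yᵀ) u v = 1) ∧
    (∀ (i : Fin N) (u v : V i), (Y * Yᵀ) ⟨i, u⟩ ⟨i, v⟩ = if u = v then 1 else 0) ∧
    (∀ (i j : Fin N), i ≠ j → ∀ u : V i, ∑ v : V j, (Y * Yᵀ) ⟨i, u⟩ ⟨j, v⟩ ≤ 1) ∧
    (∀ (i j : Fin N), i ≠ j → ∀ v : V j, ∑ u : V i, (Y * Yᵀ) ⟨i, u⟩ ⟨j, v⟩ ≤ 1) :=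
  indicator_gram_satisfies_constraints_general N V K Y hYbin hYrow hYcol
end
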